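/- arXiv:2402.18809 — 2 statements merged into one kernel-verified Lean document; each statement's English description precedes it below -/
import Mathlib

section
/- For every integer n ≥ 1 and every real k > 1, the normalized upper incomplete gamma function satisfies Γ(n, k n)/Γ(n) ≤ (k e^{1-k})^n. -/
/-!
A Chernoff bound: for `t > z` and `0 < r ≤ 1` one has `e^{-t} ≤ e^{-(1-r)z} e^{-rt}`, so
`Γ(n, z) ≤ e^{-(1-r)z} ∫_0^∞ t^{n-1} e^{-rt} dt = e^{-(1-r)z} r^{-n} Γ(n)`.
With `z = kn` and `r = 1/k` the right-hand side is `(k e^{1-k})^n Γ(n)`.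
-/

open Real

/-- The upper incomplete gamma function `Γ(n, z) = ∫_z^∞ t^(n-1) e^{-t} dt`. -/
noncomputable def upperIncGamma (n : ℕ) (z : ℝ) : ℝ :=
  ∫ t in Set.Ioi z, t ^ (n - 1) * Real.exp (-t)

open MeasureTheory Set

lemma integral_pow_mul_exp_neg_mul_Ioi {n : ℕ} (hn : 1 ≤ n) {r : ℝ} (hr : 0 < r) :
    ∫ t in Ioi 0, t ^ (n - 1) * exp (-(r * t)) = (1 / r) ^ n * Gamma n := by
  have hcast : ((n - 1 : ℕ) : ℝ) = (n : ℝ) - 1 := by push_cast [Nat.cast_sub hn]; ring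
  simpa only [← rpow_natCast, hcast] using
    integral_rpow_mul_exp_neg_mul_Ioi (by exact_mod_cast hn : (0 : ℝ) < n) hr

lemma integrableOn_pow_mul_exp_neg_mul_Ioi {n : ℕ} (hn : 1 ≤ n) {r : ℝ} (hr : 0 < r) :
    IntegrableOn (fun t ↦ t ^ (n - 1) * exp (-(r * t))) (Ioi 0) :=
  .of_integral_ne_zero <| by
    rw [integral_pow_mul_exp_neg_mul_Ioi hn hr]
    have : 0 < Gamma n := Gamma_pos_of_pos (by exact_mod_cast hn)
    positivity

lemma exp_neg_le_exp_neg_mul_mul_exp_neg_mul {r z t : ℝ} (hr : r ≤ 1) (hzt : z ≤ t) :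
    exp (-t) ≤ exp (-((1 - r) * z)) * exp (-(r * t)) := by
  rw [← exp_add, exp_le_exp]
  nlinarith

theorem upperIncGamma_le_exp_mul_Gamma {n : ℕ} (hn : 1 ≤ n) {r z : ℝ} (hr₀ : 0 < r) (hr₁ : r ≤ 1)
    (hz : 0 ≤ z) :
    upperIncGamma n z ≤ exp (-((1 - r) * z)) * ((1 / r) ^ n * Gamma n) := by
  set g : ℝ → ℝ := fun t ↦ t ^ (n - 1) * exp (-(r * t))
  have hg : IntegrableOn g (Ioi 0) := integrableOn_pow_mul_exp_neg_mul_Ioi hn hr₀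
  have hf : IntegrableOn (fun t ↦ t ^ (n - 1) * exp (-t)) (Ioi z) := by
    simpa only [one_mul] using
      (integrableOn_pow_mul_exp_neg_mul_Ioi hn one_pos).mono_set (Ioi_subset_Ioi hz)
  calc upperIncGamma n z
      ≤ ∫ t in Ioi z, exp (-((1 - r) * z)) * g t := by
        refine setIntegral_mono_on hf ((hg.mono_set (Ioi_subset_Ioi hz)).const_mul _)
          measurableSet_Ioi fun t ht ↦ ?_
        have ht₀ : 0 ≤ t := hz.trans (le_of_lt ht)
        calc t ^ (n - 1) * exp (-t)
            ≤ t ^ (n - 1) * (exp (-((1 - r) * z)) * exp (-(r * t))) := by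
              gcongr
              exact exp_neg_le_exp_neg_mul_mul_exp_neg_mul hr₁ (le_of_lt ht)
          _ = exp (-((1 - r) * z)) * g t := by ring
    _ ≤ exp (-((1 - r) * z)) * ∫ t in Ioi 0, g t := by
        have hg₀ : 0 ≤ᵐ[volume.restrict (Ioi 0)] g := by
          filter_upwards [ae_restrict_mem measurableSet_Ioi] with t (ht : 0 < t)
          positivity
        rw [integral_const_mul]
        exact mul_le_mul_of_nonneg_left
          (setIntegral_mono_set hg hg₀ (.of_forall (Ioi_subset_Ioi hz))) (exp_pos _).le
    _ = exp (-((1 - r) * z)) * ((1 / r) ^ n * Gamma n) := by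
        rw [integral_pow_mul_exp_neg_mul_Ioi hn hr₀]

theorem upperIncGamma_ratio_le (n : ℕ) (hn : 1 ≤ n) (k : ℝ) (hk : 1 < k) :
    upperIncGamma n (k * n) / Real.Gamma n ≤ (k * Real.exp (1 - k)) ^ n := by
  have hk₀ : 0 < k := by linarith
  have hΓ : 0 < Gamma n := Gamma_pos_of_pos (by exact_mod_cast hn)
  have hbound := upperIncGamma_le_exp_mul_Gamma hn (inv_pos.2 hk₀) (inv_le_one_of_one_le₀ hk.le)
    (by positivity : 0 ≤ k * n)
  have hexp : exp (-((1 - k⁻¹) * (k * n))) * (1 / k⁻¹) ^ n = (k * exp (1 - k)) ^ n := by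
    rw [mul_pow, ← exp_nat_mul, one_div, inv_inv, mul_comm]
    congr 2
    field_simp
    ring
  rw [div_le_iff₀ hΓ, ← hexp, mul_assoc]
  exact hbound
end

section
/- For real numbers d, σ, σ_γ with d > 0, σ ≥ 0, σ_γ > 0, define g(d) = (d + 2σ² + 4σ_γ²)(1 + 2d(σ² + 2σ_γ²)) / ((d + 2σ²)(1 + 2dσ²)). Then g(d) ≥ min{ 1 + 2σ_γ²/σ² , (1 + 4σ_γ²/(1+2σ²))² } for all d > 0 (interpreting 2σ_γ²/σ² as +∞ if σ = 0). -/
theorem crosspair_ratio_ge_min (σ σγ d : ℝ) (hσ : 0 ≤ σ) (hσγ : 0 < σγ) (hd : 0 < d) :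
    (0 < σ →
      (d + 2 * σ ^ 2 + 4 * σγ ^ 2) * (1 + 2 * d * (σ ^ 2 + 2 * σγ ^ 2)) /
          ((d + 2 * σ ^ 2) * (1 + 2 * d * σ ^ 2))
        ≥ min (1 + 2 * σγ ^ 2 / σ ^ 2) ((1 + 4 * σγ ^ 2 / (1 + 2 * σ ^ 2)) ^ 2)) ∧
    (σ = 0 →
      (d + 2 * σ ^ 2 + 4 * σγ ^ 2) * (1 + 2 * d * (σ ^ 2 + 2 * σγ ^ 2)) /
          ((d + 2 * σ ^ 2) * (1 + 2 * d * σ ^ 2))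
        ≥ (1 + 4 * σγ ^ 2 / (1 + 2 * σ ^ 2)) ^ 2) := by
  have hs2 : (0:ℝ) ≤ σ ^ 2 := sq_nonneg σ
  have hD : 0 < (d + 2 * σ ^ 2) * (1 + 2 * d * σ ^ 2) := by positivity
  have h1 : (0:ℝ) < 1 + 2 * σ ^ 2 := by positivity
  have hB : (1 + 2 * σ ^ 2 + 4 * σγ ^ 2) ^ 2 / (1 + 2 * σ ^ 2) ^ 2
      ≤ (d + 2 * σ ^ 2 + 4 * σγ ^ 2) * (1 + 2 * d * (σ ^ 2 + 2 * σγ ^ 2)) /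
        ((d + 2 * σ ^ 2) * (1 + 2 * d * σ ^ 2))
      ∨ 1 ≤ 4 * σ ^ 4 + 8 * σ ^ 2 * σγ ^ 2 := by
    rcases le_or_gt 1 (4 * σ ^ 4 + 8 * σ ^ 2 * σγ ^ 2) with h | h
    · exact Or.inr h
    · left
      rw [div_le_div_iff₀ (by positivity) hD]
      nlinarith [mul_nonneg (mul_nonneg (le_of_lt (by positivity : (0:ℝ) < 4 * σγ ^ 2))
        (sq_nonneg (d - 1))) (le_of_lt (by linarith : (0:ℝ) < 1 - (4 * σ ^ 4 + 8 * σ ^ 2 * σγ ^ 2)))]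
  have hBeq : (1 + 4 * σγ ^ 2 / (1 + 2 * σ ^ 2)) ^ 2
      = (1 + 2 * σ ^ 2 + 4 * σγ ^ 2) ^ 2 / (1 + 2 * σ ^ 2) ^ 2 := by
    rw [eq_div_iff (by positivity), ← mul_pow]
    congr 1
    field_simp
  constructor
  · intro hσ0
    have hs2' : (0:ℝ) < σ ^ 2 := by positivity
    rcases hB with h | h
    · refine le_trans (min_le_right _ _) ?_
      rw [hBeq]; exact h
    · refine le_trans (min_le_left _ _) ?_
      have hAeq : 1 + 2 * σγ ^ 2 / σ ^ 2 = (σ ^ 2 + 2 * σγ ^ 2) / σ ^ 2 := by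
        field_simp
      rw [hAeq, div_le_div_iff₀ hs2' hD]
      nlinarith [mul_nonneg (mul_nonneg (le_of_lt (by positivity : (0:ℝ) < 2 * σγ ^ 2))
        hd.le) (by linarith : (0:ℝ) ≤ 4 * σ ^ 4 + 8 * σ ^ 2 * σγ ^ 2 - 1)]
  · intro hσ0
    subst hσ0
    rw [hBeq, ge_iff_le, div_le_div_iff₀ (by positivity) (by simpa using hD)]
    nlinarith [mul_nonneg (le_of_lt (by positivity : (0:ℝ) < 4 * σγ ^ 2)) (sq_nonneg (d - 1))]
end
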